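/- The number of dummy charger nodes required per physical charger is bounded below by the maximum number of distinct charging visits in any feasible solution; conversely, with m dummy copies and the constraint that each dummy node is visited at most once, any feasible solution has at most m charging visits at that charger. Formally: there is a bijection between feasible multisets of up to m non-overlapping charging intervals at a charger and feasible assignments of intervals to dummy nodes satisfying v_s ≤ 1 per node and the reverse-ordering start-time constraints. -/
import Mathlib
open Finset
namespace DummyNodeAux

variable {S : Finset (ℝ × ℝ)}

/-- The monotone enumeration of the start times of `S`. -/
noncomputable def sigma (S : Finset (ℝ × ℝ)) (hinj : Set.InjOn Prod.fst (S : Set (ℝ × ℝ)))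
    (j : Fin S.card) : ℝ :=
  (S.image Prod.fst).orderEmbOfFin (Finset.card_image_of_injOn hinj) j

lemma sigma_strictMono (hinj : Set.InjOn Prod.fst (S : Set (ℝ × ℝ))) :
    StrictMono (sigma S hinj) :=
  OrderEmbedding.strictMono _

lemma sigma_exists_unique (hinj : Set.InjOn Prod.fst (S : Set (ℝ × ℝ))) (j : Fin S.card) :
    ∃! p, p ∈ S ∧ p.1 = sigma S hinj j := by
  have hmem : sigma S hinj j ∈ S.image Prod.fst :=
    Finset.orderEmbOfFin_mem _ _ _
  obtain ⟨p, hp, hpj⟩ := Finset.mem_image.1 hmem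
  refine ⟨p, ⟨hp, hpj⟩, ?_⟩
  rintro q ⟨hq, hqj⟩
  exact hinj hq hp (by rw [hqj, hpj])

/-- The element of `S` with `j`-th smallest start time. -/
noncomputable def rho (S : Finset (ℝ × ℝ)) (hinj : Set.InjOn Prod.fst (S : Set (ℝ × ℝ)))
    (j : Fin S.card) : ℝ × ℝ :=
  S.choose (fun p => p.1 = sigma S hinj j) (sigma_exists_unique hinj j)

lemma rho_mem (hinj : Set.InjOn Prod.fst (S : Set (ℝ × ℝ))) (j : Fin S.card) :
    rho S hinj j ∈ S := Finset.choose_mem _ _ _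

lemma rho_fst (hinj : Set.InjOn Prod.fst (S : Set (ℝ × ℝ))) (j : Fin S.card) :
    (rho S hinj j).1 = sigma S hinj j :=
  (Finset.choose_spec (fun p => p.1 = sigma S hinj j) S (sigma_exists_unique hinj j)).2

/-- The forward map: place the intervals of `S` on the last `S.card` dummy nodes,
in decreasing order of start time. -/
noncomputable def fwdFun (m : ℕ) (S : Finset (ℝ × ℝ))
    (hinj : Set.InjOn Prod.fst (S : Set (ℝ × ℝ))) (i : Fin m) : Option (ℝ × ℝ) :=
  if h : m - S.card ≤ i.val then
    some (rho S hinj ⟨m - 1 - i.val, by have := i.isLt; omega⟩)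
  else none

lemma fwdFun_of_le {m : ℕ} (hinj : Set.InjOn Prod.fst (S : Set (ℝ × ℝ))) {i : Fin m}
    (h : m - S.card ≤ i.val) :
    fwdFun m S hinj i = some (rho S hinj ⟨m - 1 - i.val, by have := i.isLt; omega⟩) :=
  dif_pos h

lemma fwdFun_of_lt {m : ℕ} (hinj : Set.InjOn Prod.fst (S : Set (ℝ × ℝ))) {i : Fin m}
    (h : ¬ (m - S.card ≤ i.val)) : fwdFun m S hinj i = none := dif_neg h

lemma mem_iff_fwdFun {m : ℕ} (hinj : Set.InjOn Prod.fst (S : Set (ℝ × ℝ)))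
    (hcard : S.card ≤ m) (p : ℝ × ℝ) :
    p ∈ S ↔ ∃ i : Fin m, fwdFun m S hinj i = some p := by
  constructor
  · intro hp
    have hk : 0 < S.card := Finset.card_pos.2 ⟨p, hp⟩
    have hfst : p.1 ∈ S.image Prod.fst := Finset.mem_image_of_mem _ hp
    obtain ⟨j, hj⟩ : ∃ j, sigma S hinj j = p.1 := by
      have h1 := Finset.range_orderEmbOfFin (S.image Prod.fst)
        (Finset.card_image_of_injOn hinj)
      have h2 : p.1 ∈ Set.range ((S.image Prod.fst).orderEmbOfFin
          (Finset.card_image_of_injOn hinj)) := by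
        rw [h1]; exact_mod_cast hfst
      exact h2
    refine ⟨⟨m - 1 - j.val, by have := j.isLt; omega⟩, ?_⟩
    have hle : m - S.card ≤ m - 1 - j.val := by have := j.isLt; omega
    rw [fwdFun_of_le hinj hle]
    congr 1
    have hidx : (⟨m - 1 - (m - 1 - j.val), by have := j.isLt; omega⟩ : Fin S.card) = j := by
      apply Fin.ext
      simp only
      have := j.isLt; omega
    rw [hidx]
    exact hinj (rho_mem hinj j) hp (by rw [rho_fst, hj])
  · rintro ⟨i, hi⟩
    by_cases h : m - S.card ≤ i.val
    · rw [fwdFun_of_le hinj h] at hi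
      rw [← Option.some_inj.1 hi]
      exact rho_mem hinj _
    · rw [fwdFun_of_lt hinj h] at hi
      exact absurd hi (by simp)


/-- Hypotheses on dummy-node assignments. -/
def FProp (m : ℕ) (f : Fin m → Option (ℝ × ℝ)) : Prop :=
  (∀ i p, f i = some p → 0 < p.2) ∧
  (∀ h l : Fin m, h < l → (f h).isSome → (f l).isSome) ∧
  (∀ h l : Fin m, h < l → ∀ p q, f h = some p → f l = some q → q.1 + q.2 ≤ p.1)

lemma sep' {S : Finset (ℝ × ℝ)} (hpos : ∀ p ∈ S, 0 < p.2)
    (hdisj : (S : Set (ℝ × ℝ)).Pairwise fun p q =>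
      Disjoint (Set.Ico p.1 (p.1 + p.2)) (Set.Ico q.1 (q.1 + q.2)))
    {p q : ℝ × ℝ} (hp : p ∈ S) (hq : q ∈ S) (hne : p ≠ q) (hle : q.1 ≤ p.1) :
    q.1 + q.2 ≤ p.1 := by
  by_contra hlt
  push_neg at hlt
  have hd := hdisj hp hq hne
  have hmem1 : p.1 ∈ Set.Ico p.1 (p.1 + p.2) := ⟨le_refl _, by linarith [hpos p hp]⟩
  have hmem2 : p.1 ∈ Set.Ico q.1 (q.1 + q.2) := ⟨hle, hlt⟩
  exact Set.disjoint_left.1 hd hmem1 hmem2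

lemma fwdFun_FProp {m : ℕ} {S : Finset (ℝ × ℝ)} (hpos : ∀ p ∈ S, 0 < p.2)
    (hdisj : (S : Set (ℝ × ℝ)).Pairwise fun p q =>
      Disjoint (Set.Ico p.1 (p.1 + p.2)) (Set.Ico q.1 (q.1 + q.2)))
    (hinj : Set.InjOn Prod.fst (S : Set (ℝ × ℝ))) :
    FProp m (fwdFun m S hinj) := by
  refine ⟨?_, ?_, ?_⟩
  · intro i p hip
    by_cases h : m - S.card ≤ i.val
    · rw [fwdFun_of_le hinj h] at hip
      have := Option.some_inj.1 hip
      exact hpos _ (this ▸ rho_mem hinj _)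
    · rw [fwdFun_of_lt hinj h] at hip; exact absurd hip (by simp)
  · intro h l hhl hsome
    by_cases hh : m - S.card ≤ h.val
    · have : m - S.card ≤ l.val := le_trans hh (le_of_lt hhl)
      rw [fwdFun_of_le hinj this]; rfl
    · rw [fwdFun_of_lt hinj hh] at hsome; exact absurd hsome (by simp)
  · intro h l hhl p q hp hq
    by_cases hh : m - S.card ≤ h.val
    · have hl : m - S.card ≤ l.val := le_trans hh (le_of_lt hhl)
      rw [fwdFun_of_le hinj hh] at hp
      rw [fwdFun_of_le hinj hl] at hq
      have hp' := Option.some_inj.1 hp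
      have hq' := Option.some_inj.1 hq
      have hlt : (⟨m - 1 - l.val, by have := l.isLt; omega⟩ : Fin S.card) <
          ⟨m - 1 - h.val, by have := h.isLt; omega⟩ := by
        have hl2 := l.isLt
        have hhl' : h.val < l.val := hhl
        simp only [Fin.mk_lt_mk]
        omega
      have hss := sigma_strictMono hinj hlt
      have hqlt : q.1 < p.1 := by
        rw [← hp', ← hq', rho_fst, rho_fst]
        exact hss
      exact sep' hpos hdisj (hp' ▸ rho_mem hinj _) (hq' ▸ rho_mem hinj _)
        (fun he => absurd (congrArg Prod.fst he) (ne_of_gt hqlt)) (le_of_lt hqlt)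
    · rw [fwdFun_of_lt hinj hh] at hp; exact absurd hp (by simp)

lemma bwd_inj {m : ℕ} {f : Fin m → Option (ℝ × ℝ)} (hf : FProp m f) :
    ∀ a a' b, b ∈ f a → b ∈ f a' → a = a' := by
  intro a a' b hb hb'
  rw [Option.mem_def] at hb hb'
  rcases lt_trichotomy a a' with h | h | h
  · have h1 := hf.2.2 a a' h b b hb hb'
    have h2 := hf.1 a b hb
    exfalso; linarith
  · exact h
  · have h1 := hf.2.2 a' a h b b hb' hb
    have h2 := hf.1 a b hb
    exfalso; linarith

/-- The backward map: the set of intervals used by an assignment. -/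
def bwdSet {m : ℕ} (f : Fin m → Option (ℝ × ℝ)) (hf : FProp m f) : Finset (ℝ × ℝ) :=
  Finset.filterMap f Finset.univ (bwd_inj hf)

lemma mem_bwdSet {m : ℕ} {f : Fin m → Option (ℝ × ℝ)} (hf : FProp m f) (p : ℝ × ℝ) :
    p ∈ bwdSet f hf ↔ ∃ i, f i = some p := by
  simp [bwdSet, Finset.mem_filterMap, Option.mem_def]

lemma bwdSet_card_le {m : ℕ} {f : Fin m → Option (ℝ × ℝ)} (hf : FProp m f) :
    (bwdSet f hf).card ≤ m := by
  have h := Finset.card_le_card_of_surjOn (fun i : Fin m => (f i).getD (0, 0))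
    (s := Finset.univ) (t := bwdSet f hf) ?_
  · simpa using h
  · intro p hp
    rw [Finset.mem_coe, mem_bwdSet] at hp
    obtain ⟨i, hi⟩ := hp
    exact ⟨i, by simp, by simp [hi]⟩

lemma bwdSet_pos {m : ℕ} {f : Fin m → Option (ℝ × ℝ)} (hf : FProp m f) :
    ∀ p ∈ bwdSet f hf, 0 < p.2 := by
  intro p hp
  obtain ⟨i, hi⟩ := (mem_bwdSet hf p).1 hp
  exact hf.1 i p hi

lemma bwdSet_disj {m : ℕ} {f : Fin m → Option (ℝ × ℝ)} (hf : FProp m f) :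
    ((bwdSet f hf : Set (ℝ × ℝ))).Pairwise fun p q =>
      Disjoint (Set.Ico p.1 (p.1 + p.2)) (Set.Ico q.1 (q.1 + q.2)) := by
  intro p hp q hq hne
  rw [Finset.mem_coe, mem_bwdSet] at hp hq
  obtain ⟨i, hi⟩ := hp
  obtain ⟨j, hj⟩ := hq
  have hij : i ≠ j := by
    intro h
    apply hne
    rw [h] at hi
    rw [hi] at hj
    exact Option.some_inj.1 hj
  rw [Set.Ico_disjoint_Ico]
  rcases lt_or_gt_of_ne hij with h | h
  · have h1 := hf.2.2 i j h p q hi hj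
    calc min (p.1 + p.2) (q.1 + q.2) ≤ q.1 + q.2 := min_le_right _ _
      _ ≤ p.1 := h1
      _ ≤ max p.1 q.1 := le_max_left _ _
  · have h1 := hf.2.2 j i h q p hj hi
    calc min (p.1 + p.2) (q.1 + q.2) ≤ p.1 + p.2 := min_le_left _ _
      _ ≤ q.1 := h1
      _ ≤ max p.1 q.1 := le_max_right _ _


lemma injOn_fst {S : Finset (ℝ × ℝ)} (hpos : ∀ p ∈ S, 0 < p.2)
    (hdisj : (S : Set (ℝ × ℝ)).Pairwise fun p q =>
      Disjoint (Set.Ico p.1 (p.1 + p.2)) (Set.Ico q.1 (q.1 + q.2))) :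
    Set.InjOn Prod.fst (S : Set (ℝ × ℝ)) := by
  intro p hp q hq hfst
  by_contra hne
  have h1 := sep' hpos hdisj hp hq hne (le_of_eq hfst.symm)
  have h2 := hpos q hq
  rw [hfst] at h1
  linarith

lemma fwd_bwd {m : ℕ} {f : Fin m → Option (ℝ × ℝ)} (hf : FProp m f) :
    fwdFun m (bwdSet f hf) (injOn_fst (bwdSet_pos hf) (bwdSet_disj hf)) = f := by
  classical
  set S := bwdSet f hf with hSdef
  set hinj := injOn_fst (bwdSet_pos hf) (bwdSet_disj hf) with hinjdef
  set k := S.card with hkdef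
  have hkm : k ≤ m := bwdSet_card_le hf
  set U := Finset.univ.filter (fun i : Fin m => (f i).isSome) with hUdef
  -- S is the image of U under the value map, injectively
  have himg : S = U.image (fun i => (f i).getD (0, 0)) := by
    ext p
    rw [hSdef, mem_bwdSet hf]
    simp only [Finset.mem_image, hUdef, Finset.mem_filter, Finset.mem_univ, true_and]
    constructor
    · rintro ⟨i, hi⟩
      exact ⟨i, by simp [hi], by simp [hi]⟩
    · rintro ⟨i, hsome, heq⟩
      obtain ⟨q, hq⟩ := Option.isSome_iff_exists.1 hsome
      refine ⟨i, ?_⟩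
      rw [hq]
      simp [hq] at heq
      rw [heq]
  have hinjU : Set.InjOn (fun i => (f i).getD (0, 0)) (U : Set (Fin m)) := by
    intro i hi j hj heq
    simp only [hUdef, Finset.coe_filter, Set.mem_setOf_eq] at hi hj
    obtain ⟨p, hp⟩ := Option.isSome_iff_exists.1 hi.2
    obtain ⟨q, hq⟩ := Option.isSome_iff_exists.1 hj.2
    simp only [hp, hq, Option.getD_some] at heq
    exact bwd_inj hf i j p (Option.mem_def.2 hp) (Option.mem_def.2 (by rw [hq, heq]))
  have hUcard : U.card = k := by
    rw [hkdef, himg, Finset.card_image_of_injOn hinjU]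
  -- characterization of used indices
  have hiff : ∀ i : Fin m, (f i).isSome ↔ m - k ≤ i.val := by
    intro i
    constructor
    · intro hsome
      have hsub : Finset.Ici i ⊆ U := by
        intro j hj
        rw [Finset.mem_Ici] at hj
        simp only [hUdef, Finset.mem_filter, Finset.mem_univ, true_and]
        rcases eq_or_lt_of_le hj with h | h
        · rw [← h]; exact hsome
        · exact hf.2.1 i j h hsome
      have hc := Finset.card_le_card hsub
      rw [Fin.card_Ici, hUcard] at hc
      have := i.isLt
      omega
    · intro hle
      by_contra hnone
      rw [Option.not_isSome_iff_eq_none] at hnone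
      have hsub : U ⊆ Finset.Ioi i := by
        intro j hj
        simp only [hUdef, Finset.mem_filter, Finset.mem_univ, true_and] at hj
        rw [Finset.mem_Ioi]
        by_contra hji
        push_neg at hji
        rcases eq_or_lt_of_le hji with h | h
        · rw [h] at hj
          rw [hnone] at hj
          exact absurd hj (by simp)
        · have := hf.2.1 j i h hj
          rw [hnone] at this
          exact absurd this (by simp)
      have hc := Finset.card_le_card hsub
      rw [Fin.card_Ioi, hUcard] at hc
      have := i.isLt
      omega
  -- the value map from the top
  have hidx : ∀ j : Fin k, m - 1 - j.val < m := by
    intro j; have := j.isLt; omega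
  set gval : Fin k → ℝ × ℝ := fun j => (f ⟨m - 1 - j.val, hidx j⟩).getD (0, 0)
    with hgvaldef
  have hsome_at : ∀ j : Fin k, (f ⟨m - 1 - j.val, hidx j⟩).isSome := by
    intro j
    apply (hiff _).2
    simp only
    have := j.isLt
    omega
  have hgeq : ∀ j : Fin k, f ⟨m - 1 - j.val, hidx j⟩ = some (gval j) := by
    intro j
    obtain ⟨q, hq⟩ := Option.isSome_iff_exists.1 (hsome_at j)
    rw [hq, hgvaldef]
    simp [hq]
  have hgmem : ∀ j : Fin k, gval j ∈ S := by
    intro j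
    rw [hSdef, mem_bwdSet hf]
    exact ⟨_, hgeq j⟩
  have hgmono : StrictMono fun j : Fin k => (gval j).1 := by
    intro j j' hjj'
    have hlt : (⟨m - 1 - j'.val, hidx j'⟩ : Fin m) < ⟨m - 1 - j.val, hidx j⟩ := by
      simp only [Fin.mk_lt_mk]
      have := j'.isLt
      have : j.val < j'.val := hjj'
      omega
    have horder := hf.2.2 _ _ hlt _ _ (hgeq j') (hgeq j)
    have hposj := hf.1 _ _ (hgeq j)
    simp only
    linarith
  have hgs : ∀ j : Fin k, (gval j).1 = sigma S hinj j := by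
    have := Finset.orderEmbOfFin_unique (f := fun j : Fin k => (gval j).1)
      (Finset.card_image_of_injOn hinj)
      (fun j => Finset.mem_image_of_mem _ (hgmem j)) hgmono
    intro j
    exact congrFun this j
  -- conclude
  funext i
  by_cases h : m - k ≤ i.val
  · rw [fwdFun_of_le hinj h]
    obtain ⟨q, hq⟩ := Option.isSome_iff_exists.1 ((hiff i).2 h)
    rw [hq]
    congr 1
    set j : Fin k := ⟨m - 1 - i.val, by have := i.isLt; omega⟩ with hjdef
    have hji : (⟨m - 1 - j.val, hidx j⟩ : Fin m) = i := by
      apply Fin.ext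
      simp only [hjdef]
      have := i.isLt
      omega
    have h3 : gval j = q := by
      rw [hgvaldef]
      simp only [hji, hq, Option.getD_some]
    have hqS : q ∈ S := by
      rw [hSdef, mem_bwdSet hf]; exact ⟨i, hq⟩
    exact hinj (rho_mem hinj j) hqS (by rw [rho_fst, ← hgs j, h3])
  · rw [fwdFun_of_lt hinj h]
    have : ¬ (f i).isSome := fun hs => h ((hiff i).1 hs)
    exact (Option.not_isSome_iff_eq_none.1 this).symm

lemma bwd_fwd {m : ℕ} {S : Finset (ℝ × ℝ)} (hcard : S.card ≤ m)
    (hpos : ∀ p ∈ S, 0 < p.2)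
    (hdisj : (S : Set (ℝ × ℝ)).Pairwise fun p q =>
      Disjoint (Set.Ico p.1 (p.1 + p.2)) (Set.Ico q.1 (q.1 + q.2)))
    (hf : FProp m (fwdFun m S (injOn_fst hpos hdisj))) :
    bwdSet (fwdFun m S (injOn_fst hpos hdisj)) hf = S := by
  ext p
  rw [mem_bwdSet hf]
  exact (mem_iff_fwdFun (injOn_fst hpos hdisj) hcard p).symm

end DummyNodeAux

/-- Feasible sets of at most `m` non-overlapping charging intervals at a charger
are in bijection with feasible dummy-node assignments: each dummy node hosts at
most one interval, later dummy nodes are used first (reverse-order symmetry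
breaking `v_h ≤ v_l`), and for used dummy nodes `h < l` the interval at `h`
starts no earlier than the end of the interval at `l`. The bijection preserves
the set of intervals. -/
theorem dummy_node_bijection (m : ℕ) :
    ∃ e : { S : Finset (ℝ × ℝ) // S.card ≤ m ∧ (∀ p ∈ S, 0 < p.2) ∧
        (S : Set (ℝ × ℝ)).Pairwise fun p q =>
          Disjoint (Set.Ico p.1 (p.1 + p.2)) (Set.Ico q.1 (q.1 + q.2)) } ≃
      { f : Fin m → Option (ℝ × ℝ) //
        (∀ i p, f i = some p → 0 < p.2) ∧
        (∀ h l : Fin m, h < l → (f h).isSome → (f l).isSome) ∧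
        (∀ h l : Fin m, h < l → ∀ p q, f h = some p → f l = some q →
          q.1 + q.2 ≤ p.1) },
      ∀ S, ∀ p : ℝ × ℝ, p ∈ S.1 ↔ ∃ i : Fin m, (e S).1 i = some p := by
  classical
  refine ⟨⟨fun S => ⟨DummyNodeAux.fwdFun m S.1
      (DummyNodeAux.injOn_fst S.2.2.1 S.2.2.2),
      DummyNodeAux.fwdFun_FProp S.2.2.1 S.2.2.2 _⟩,
    fun f => ⟨DummyNodeAux.bwdSet f.1 ⟨f.2.1, f.2.2.1, f.2.2.2⟩,
      DummyNodeAux.bwdSet_card_le _, DummyNodeAux.bwdSet_pos _,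
      DummyNodeAux.bwdSet_disj _⟩, ?_, ?_⟩, ?_⟩
  · intro S
    exact Subtype.ext (DummyNodeAux.bwd_fwd S.2.1 S.2.2.1 S.2.2.2
      (DummyNodeAux.fwdFun_FProp S.2.2.1 S.2.2.2 _))
  · intro f
    exact Subtype.ext (DummyNodeAux.fwd_bwd ⟨f.2.1, f.2.2.1, f.2.2.2⟩)
  · intro S p
    exact DummyNodeAux.mem_iff_fwdFun _ S.2.1 p
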